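/- arXiv:1810.00600 — 3 statements merged into one kernel-verified Lean document; each statement's English description precedes it below -/
import Mathlib

section
/- Let H(a) ≥ 0 be a bounded non-negative integral Hankel operator whose kernel a is positive, monotone decreasing and continuous on (0,∞). Then for every λ > 0, λ·a(λ) ≤ 2‖H(a)‖, where ‖·‖ is the operator norm on L^2(0,∞). -/
open MeasureTheory Set
open scoped InnerProductSpace ENNReal

/-!
Test the quadratic form of `H(a)` on the indicator `f` of `(0, λ/2)`. For `t, s` in this interval
`t + s < λ`, so monotonicity gives `a(t + s) ≥ a(λ)` and hence
`(H(a) f, f) = ∫∫_{(0,λ/2)²} a(t + s) ≥ a(λ) (λ/2)²`, while `(H(a) f, f) ≤ ‖H(a)‖ ‖f‖² = ‖H(a)‖ λ/2`.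
-/

section IntegralOperator

variable {α : Type*} [MeasurableSpace α] {μ : Measure α} {k : α → α → ℝ}
  {T : Lp ℂ 2 μ →L[ℂ] Lp ℂ 2 μ} {s : Set α}

theorem ContinuousLinearMap.re_inner_self_le_opNorm_mul_sq {E : Type*} [NormedAddCommGroup E]
    [InnerProductSpace ℂ E] (A : E →L[ℂ] E) (x : E) : (⟪A x, x⟫_ℂ).re ≤ ‖A‖ * ‖x‖ ^ 2 :=
  calc (⟪A x, x⟫_ℂ).re ≤ ‖A x‖ * ‖x‖ := re_inner_le_norm (𝕜 := ℂ) _ _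
    _ ≤ ‖A‖ * ‖x‖ * ‖x‖ := by gcongr; exact A.le_opNorm x
    _ = ‖A‖ * ‖x‖ ^ 2 := by ring

theorem L2.norm_indicatorConstLp_one_sq (hs : MeasurableSet s) (hμs : μ s ≠ ∞) :
    ‖indicatorConstLp 2 hs hμs (1 : ℂ)‖ ^ 2 = μ.real s := by
  rw [← inner_self_eq_norm_sq (𝕜 := ℂ), L2.inner_indicatorConstLp_indicatorConstLp, inter_self]
  simp

variable (hT : ∀ f : Lp ℂ 2 μ, (T f : α → ℂ) =ᵐ[μ] fun t => ∫ u, (k t u : ℂ) * f u ∂μ)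
include hT

theorem apply_indicatorConstLp_one_ae_eq (hs : MeasurableSet s) (hμs : μ s ≠ ∞) :
    (T (indicatorConstLp 2 hs hμs (1 : ℂ)) : α → ℂ) =ᵐ[μ]
      fun t => ((∫ u in s, k t u ∂μ : ℝ) : ℂ) := by
  filter_upwards [hT (indicatorConstLp 2 hs hμs 1)] with t ht
  rw [ht, ← integral_complex_ofReal, ← integral_indicator hs]
  refine integral_congr_ae ?_
  filter_upwards [indicatorConstLp_coeFn (p := 2) (hs := hs) (hμs := hμs) (c := (1 : ℂ))]
    with u hu
  by_cases hus : u ∈ s <;> simp [hu, hus]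

theorem integrableOn_setIntegral_kernel (hs : MeasurableSet s) (hμs : μ s ≠ ∞) :
    IntegrableOn (fun t => ∫ u in s, k t u ∂μ) s μ := by
  have hTf : IntegrableOn (T (indicatorConstLp 2 hs hμs (1 : ℂ))) s μ :=
    integrableOn_Lp_of_measure_ne_top _ one_le_two hμs
  exact (hTf.congr_fun_ae (ae_restrict_of_ae (apply_indicatorConstLp_one_ae_eq hT hs hμs))).re

theorem re_inner_apply_indicatorConstLp_one (hs : MeasurableSet s) (hμs : μ s ≠ ∞) :
    (⟪T (indicatorConstLp 2 hs hμs (1 : ℂ)), indicatorConstLp 2 hs hμs (1 : ℂ)⟫_ℂ).re =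
      ∫ t in s, ∫ u in s, k t u ∂μ ∂μ := by
  rw [← inner_conj_symm, Complex.conj_re, L2.inner_indicatorConstLp_one,
    integral_congr_ae (ae_restrict_of_ae (apply_indicatorConstLp_one_ae_eq hT hs hμs)),
    integral_complex_ofReal, Complex.ofReal_re]

theorem mul_measureReal_le_opNorm_of_le_kernel (hs : MeasurableSet s) (hμs : μ s ≠ ∞)
    (hμs_pos : 0 < μ.real s) {m : ℝ} (hm : ∀ t ∈ s, ∀ u ∈ s, m ≤ k t u)
    (hk_int : ∀ t ∈ s, IntegrableOn (k t) s μ) : m * μ.real s ≤ ‖T‖ := by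
  set f := indicatorConstLp 2 hs hμs (1 : ℂ)
  have h_inner : m * μ.real s * μ.real s ≤ (⟪T f, f⟫_ℂ).re := by
    rw [re_inner_apply_indicatorConstLp_one hT]
    refine setIntegral_ge_of_const_le_real hs hμs (fun t ht => ?_)
      (integrableOn_setIntegral_kernel hT hs hμs)
    exact setIntegral_ge_of_const_le_real hs hμs (hm t ht) (hk_int t ht)
  have h_norm := T.re_inner_self_le_opNorm_mul_sq f
  rw [L2.norm_indicatorConstLp_one_sq] at h_norm
  exact le_of_mul_le_mul_right (h_inner.trans h_norm) hμs_pos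

end IntegralOperator

theorem pos_hankel_kernel_bound_general
    (a : ℝ → ℝ) (ha_mono : AntitoneOn a (Ioi 0))
    (T : Lp ℂ 2 (volume.restrict (Ioi (0:ℝ))) →L[ℂ] Lp ℂ 2 (volume.restrict (Ioi (0:ℝ))))
    (hT : ∀ f : Lp ℂ 2 (volume.restrict (Ioi (0:ℝ))),
      (T f : ℝ → ℂ) =ᵐ[volume.restrict (Ioi (0:ℝ))]
        fun t => ∫ s in Ioi (0:ℝ), (a (t + s) : ℂ) * f s)
    (lam : ℝ) (hlam : 0 < lam) :
    lam * a lam ≤ 2 * ‖T‖ := by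
  set μ := volume.restrict (Ioi (0:ℝ))
  have hμs : μ (Ioo 0 (lam / 2)) = ENNReal.ofReal (lam / 2) := by
    rw [Measure.restrict_apply measurableSet_Ioo, inter_eq_left.mpr Ioo_subset_Ioi_self,
      Real.volume_Ioo, sub_zero]
  have hμs_real : μ.real (Ioo 0 (lam / 2)) = lam / 2 := by
    rw [Measure.real_def, hμs, ENNReal.toReal_ofReal (by positivity)]
  have hkernel : ∀ t ∈ Ioo 0 (lam / 2), ∀ u ∈ Ioo 0 (lam / 2), a lam ≤ a (t + u) :=
    fun t ht u hu => ha_mono (mem_Ioi.mpr (by linarith [ht.1, hu.1])) (mem_Ioi.mpr hlam)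
      (by linarith [ht.2, hu.2])
  have hk_int : ∀ t ∈ Ioo 0 (lam / 2), IntegrableOn (fun u => a (t + u)) (Ioo 0 (lam / 2)) μ := by
    intro t ht
    have h_anti : AntitoneOn (fun u => a (t + u)) (Icc 0 (lam / 2)) :=
      fun u hu v hv huv => ha_mono (mem_Ioi.mpr (by linarith [ht.1, hu.1]))
        (mem_Ioi.mpr (by linarith [ht.1, hv.1])) (by linarith)
    exact (h_anti.integrableOn_isCompact isCompact_Icc).mono Ioo_subset_Icc_self
      Measure.restrict_le_self
  have hbound := mul_measureReal_le_opNorm_of_le_kernel (k := fun t u => a (t + u)) hT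
    measurableSet_Ioo (by rw [hμs]; exact ENNReal.ofReal_ne_top)
    (by rw [hμs_real]; positivity) hkernel hk_int
  rw [hμs_real] at hbound
  linarith

/-- For a bounded non-negative integral Hankel operator `H(a)` with kernel `a` positive,
decreasing and continuous on `(0,∞)`, one has `λ·a(λ) ≤ 2‖H(a)‖` for every `λ > 0`. -/
theorem pos_hankel_kernel_bound
    (a : ℝ → ℝ) (ha_pos : ∀ t, 0 < t → 0 < a t) (ha_mono : AntitoneOn a (Ioi 0))
    (ha_cont : ContinuousOn a (Ioi 0))
    (T : Lp ℂ 2 (volume.restrict (Ioi (0:ℝ))) →L[ℂ] Lp ℂ 2 (volume.restrict (Ioi (0:ℝ))))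
    (hT : ∀ f : Lp ℂ 2 (volume.restrict (Ioi (0:ℝ))),
      (T f : ℝ → ℂ) =ᵐ[volume.restrict (Ioi (0:ℝ))]
        fun t => ∫ s in Ioi (0:ℝ), (a (t + s) : ℂ) * f s)
    (hpos : ∀ f : Lp ℂ 2 (volume.restrict (Ioi (0:ℝ))), 0 ≤ (⟪T f, f⟫_ℂ).re)
    (lam : ℝ) (hlam : 0 < lam) :
    lam * a lam ≤ 2 * ‖T‖ :=
  pos_hankel_kernel_bound_general a ha_mono T hT lam hlam
end

section
/- Let α = {α(j)}_{j≥0} be a sequence and λ ≥ 2, with α(j) = a(j + λ) for a positive decreasing function a. Define the integral operator K on L^2(0,∞) with kernel K(t,s) = a(λ + ⌊t⌋ + ⌊s⌋). Then under the identification L^2(0,∞) ≅ ℓ²(ℤ_+) ⊗ L^2(0,1), K = H(α) ⊗ R, where H(α) is the Hankel matrix {α(j+k)} and R is the rank-one operator f ↦ (∫_0^1 f) · 1 on L^2(0,1). Consequently ‖K‖ = ‖H(α)‖ and ‖K‖_{S_p} = ‖H(α)‖_{S_p} for all p > 0. -/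
open MeasureTheory Set ContinuousLinearMap

/-- The `n`-th approximation number (= singular value, on Hilbert spaces) of a bounded
operator: the distance from `A` to the operators of rank at most `n`. -/
noncomputable def singularValue {E F : Type*} [NormedAddCommGroup E] [NormedAddCommGroup F]
    [NormedSpace ℂ E] [NormedSpace ℂ F] (A : E →L[ℂ] F) (n : ℕ) : ℝ :=
  sInf {r : ℝ | ∃ T : E →L[ℂ] F,
    Module.rank ℂ (LinearMap.range (T : E →ₗ[ℂ] F)) ≤ (n : Cardinal) ∧ r = ‖A - T‖}

/-- Membership in the Schatten class `S_p`. -/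
def MemSchatten {E F : Type*} [NormedAddCommGroup E] [NormedAddCommGroup F]
    [NormedSpace ℂ E] [NormedSpace ℂ F] (p : ℝ) (A : E →L[ℂ] F) : Prop :=
  Summable (fun n => singularValue A n ^ p)

/-- The Schatten `p`-(quasi)norm `(∑ sₙ(A)^p)^{1/p}`. -/
noncomputable def schattenNorm {E F : Type*} [NormedAddCommGroup E] [NormedAddCommGroup F]
    [NormedSpace ℂ E] [NormedSpace ℂ F] (p : ℝ) (A : E →L[ℂ] F) : ℝ :=
  (∑' n : ℕ, singularValue A n ^ p) ^ (1 / p)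

/-!
Sending `x ∈ ℓ²` to the step function `t ↦ x ⌊t⌋₊` is an isometry `Φ : ℓ² → L²(0,∞)`, and `Φ*`
sends `f` to its sequence of unit-interval integrals `∫_j^{j+1} f`. Since the kernel of `K` only
depends on `⌊s⌋ + ⌊t⌋`, integrating over the unit intervals gives `K = Φ H(α) Φ*`; as `Φ* Φ = 1`,
also `H(α) = Φ* K Φ`. Composing with contractions does not increase approximation numbers, so `K`
and `H(α)` have the same singular values, hence the same norm `s₀` and Schatten quasinorms.
-/

open scoped ENNReal

section SingularValue

variable {E F E' F' : Type*} [NormedAddCommGroup E] [NormedAddCommGroup F]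
  [NormedAddCommGroup E'] [NormedAddCommGroup F']
  [NormedSpace ℂ E] [NormedSpace ℂ F] [NormedSpace ℂ E'] [NormedSpace ℂ F']

theorem singularValue_zero (A : E →L[ℂ] F) : singularValue A 0 = ‖A‖ := by
  have hset : {r : ℝ | ∃ T : E →L[ℂ] F,
      Module.rank ℂ (LinearMap.range (T : E →ₗ[ℂ] F)) ≤ ((0 : ℕ) : Cardinal) ∧ r = ‖A - T‖}
      = {‖A‖} := by
    ext r
    simp only [mem_ofPred_eq, mem_singleton_iff, Nat.cast_zero, nonpos_iff_eq_zero,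
      Submodule.rank_eq_zero, LinearMap.range_eq_bot]
    constructor
    · rintro ⟨T, hT, rfl⟩
      obtain rfl : T = 0 := coe_inj.1 hT
      simp
    · rintro rfl
      exact ⟨0, rfl, by simp⟩
  rw [singularValue, hset, csInf_singleton]

theorem singularValue_comp_le (A : E →L[ℂ] F) {P : F →L[ℂ] F'} {Q : E' →L[ℂ] E}
    (hP : ‖P‖ ≤ 1) (hQ : ‖Q‖ ≤ 1) (n : ℕ) :
    singularValue (P ∘L A ∘L Q) n ≤ singularValue A n := by
  have hzero : Module.rank ℂ (LinearMap.range ((0 : E →L[ℂ] F) : E →ₗ[ℂ] F)) ≤ n := by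
    simp
  refine le_csInf ⟨‖A - 0‖, 0, hzero, rfl⟩ ?_
  rintro _ ⟨T, hT, rfl⟩
  refine csInf_le_of_le ⟨0, ?_⟩ ⟨P ∘L T ∘L Q, ?_, rfl⟩ ?_
  · rintro _ ⟨S, -, rfl⟩
    exact norm_nonneg _
  · have hTQ : Module.rank ℂ (LinearMap.range ((T : E →ₗ[ℂ] F) ∘ₗ (Q : E' →ₗ[ℂ] E))) ≤ n :=
      (Submodule.rank_mono (LinearMap.range_comp_le_range _ _)).trans hT
    have h := (lift_rank_map_le (P : F →ₗ[ℂ] F') _).trans (Cardinal.lift_le.2 hTQ)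
    rw [← LinearMap.range_comp, Cardinal.lift_natCast] at h
    exact Cardinal.lift_le_nat_iff.1 h
  · calc ‖P ∘L A ∘L Q - P ∘L T ∘L Q‖ = ‖P ∘L (A - T) ∘L Q‖ := by
          rw [sub_comp, comp_sub]
      _ ≤ ‖P‖ * (‖A - T‖ * ‖Q‖) := (opNorm_comp_le _ _).trans
          (mul_le_mul_of_nonneg_left (opNorm_comp_le _ _) (norm_nonneg _))
      _ ≤ 1 * (‖A - T‖ * 1) := by gcongr
      _ = ‖A - T‖ := by ring

end SingularValue

section Isometry

variable {H K : Type*} [NormedAddCommGroup H] [InnerProductSpace ℂ H] [CompleteSpace H]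
  [NormedAddCommGroup K] [InnerProductSpace ℂ K] [CompleteSpace K]

theorem singularValue_conj_of_norm_map {Φ : H →L[ℂ] K} (hΦ : ∀ x, ‖Φ x‖ = ‖x‖)
    (A : H →L[ℂ] H) (n : ℕ) : singularValue (Φ ∘L A ∘L adjoint Φ) n = singularValue A n := by
  have hΦ₁ : ‖Φ‖ ≤ 1 := opNorm_le_bound _ zero_le_one fun x => by rw [hΦ, one_mul]
  have hΦ₁' : ‖adjoint Φ‖ ≤ 1 := by rwa [LinearIsometryEquiv.norm_map]
  have hA : adjoint Φ ∘L (Φ ∘L A ∘L adjoint Φ) ∘L Φ = A := by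
    have h := (norm_map_iff_adjoint_comp_self Φ).1 hΦ
    rw [← comp_assoc, ← comp_assoc, h, one_def, id_comp, comp_assoc, h, one_def, comp_id]
  refine le_antisymm (singularValue_comp_le A hΦ₁ hΦ₁' n) ?_
  conv_lhs => rw [← hA]
  exact singularValue_comp_le _ hΦ₁' hΦ₁ n

end Isometry

open Function in
theorem pairwise_disjoint_Ioo_natCast :
    Pairwise (Disjoint on fun j : ℕ => Ioo (j : ℝ) (j + 1)) := fun i j hij => by
  simpa using pairwise_disjoint_Ioo_intCast (α := ℝ) (Nat.cast_injective.ne hij)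

theorem natFloor_eq_of_mem_Ioo {j : ℕ} {t : ℝ} (ht : t ∈ Ioo (j : ℝ) (j + 1)) : ⌊t⌋₊ = j :=
  Nat.floor_eq_on_Ico j t ⟨ht.1.le, ht.2⟩

theorem Ioi_zero_ae_eq_iUnion_Ioo_natCast :
    Ioi (0 : ℝ) =ᵐ[volume] ⋃ j : ℕ, Ioo (j : ℝ) (j + 1) := by
  refine ae_eq_set.2 ⟨measure_mono_null (fun t ⟨ht, hnot⟩ => ?_)
    ((countable_range ((↑) : ℕ → ℝ)).measure_zero _), ?_⟩
  · have hfloor : (⌊t⌋₊ : ℝ) ≤ t := Nat.floor_le ht.le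
    refine ⟨⌊t⌋₊, hfloor.eq_of_not_lt fun hlt => hnot ?_⟩
    exact mem_iUnion.2 ⟨⌊t⌋₊, hlt, Nat.lt_floor_add_one t⟩
  · refine measure_mono_null (fun t ⟨ht, hnot⟩ => hnot ?_) measure_empty
    obtain ⟨j, hj⟩ := mem_iUnion.1 ht
    exact (Nat.cast_nonneg j).trans_lt hj.1

theorem lintegral_Ioi_comp_natFloor (c : ℕ → ℝ≥0∞) :
    ∫⁻ t in Ioi (0 : ℝ), c ⌊t⌋₊ = ∑' j, c j := by
  rw [setLIntegral_congr Ioi_zero_ae_eq_iUnion_Ioo_natCast,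
    lintegral_iUnion (fun _ => measurableSet_Ioo) pairwise_disjoint_Ioo_natCast]
  refine tsum_congr fun j => ?_
  rw [setLIntegral_congr_fun measurableSet_Ioo fun t ht => by rw [natFloor_eq_of_mem_Ioo ht]]
  simp

theorem integral_Ioi_comp_natFloor_mul {y : ℕ → ℂ} {f : ℝ → ℂ}
    (hint : IntegrableOn (fun s => y ⌊s⌋₊ * f s) (Ioi 0)) :
    ∫ s in Ioi (0 : ℝ), y ⌊s⌋₊ * f s = ∑' j, y j * ∫ s in Ioo (j : ℝ) (j + 1), f s := by
  rw [setIntegral_congr_set Ioi_zero_ae_eq_iUnion_Ioo_natCast,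
    integral_iUnion (fun _ => measurableSet_Ioo) pairwise_disjoint_Ioo_natCast
      (hint.congr_set_ae Ioi_zero_ae_eq_iUnion_Ioo_natCast.symm)]
  refine tsum_congr fun j => ?_
  rw [setIntegral_congr_fun measurableSet_Ioo fun s hs => by rw [natFloor_eq_of_mem_Ioo hs],
    integral_const_mul]

local notation "ℓ²" => lp (fun _ : ℕ => ℂ) 2
local notation "L²₊" => Lp ℂ 2 (volume.restrict (Ioi (0 : ℝ)))

theorem lp.tsum_enorm_rpow {ι : Type*} {E : ι → Type*} [∀ i, NormedAddCommGroup (E i)]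
    {p : ℝ≥0∞} [Fact (1 ≤ p)] (hp : 0 < p.toReal) (f : lp E p) :
    ∑' i, ‖f i‖ₑ ^ p.toReal = ‖f‖ₑ ^ p.toReal := by
  have h := lp.hasSum_norm hp f
  simp only [← ofReal_norm, ENNReal.ofReal_rpow_of_nonneg (norm_nonneg _) hp.le]
  rw [← ENNReal.ofReal_tsum_of_nonneg (fun _ => by positivity) h.summable, h.tsum_eq]

theorem eLpNorm_comp_natFloor (x : ℓ²) :
    eLpNorm (fun t => x ⌊t⌋₊) 2 (volume.restrict (Ioi (0 : ℝ))) = ‖x‖ₑ := by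
  rw [eLpNorm_eq_lintegral_rpow_enorm_toReal two_ne_zero ENNReal.ofNat_ne_top,
    lintegral_Ioi_comp_natFloor (fun j => ‖x j‖ₑ ^ (2 : ℝ≥0∞).toReal),
    lp.tsum_enorm_rpow (by norm_num) x, ← ENNReal.rpow_mul]
  norm_num

theorem memLp_comp_natFloor (x : ℓ²) :
    MemLp (fun t => x ⌊t⌋₊) 2 (volume.restrict (Ioi (0 : ℝ))) :=
  ⟨((measurable_of_countable _).comp Nat.measurable_floor).aestronglyMeasurable,
    (eLpNorm_comp_natFloor x).trans_lt enorm_lt_top⟩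

noncomputable def floorEmbedding : ℓ² →ₗᵢ[ℂ] L²₊ where
  toFun x := MemLp.toLp (fun t => x ⌊t⌋₊) (memLp_comp_natFloor x)
  map_add' x y := by rw [← MemLp.toLp_add]; rfl
  map_smul' c x := by rw [RingHom.id_apply, ← MemLp.toLp_const_smul]; rfl
  norm_map' x := (Lp.norm_toLp _ (memLp_comp_natFloor x)).trans <| by
    rw [eLpNorm_comp_natFloor, toReal_enorm]

theorem coeFn_floorEmbedding (x : ℓ²) :
    floorEmbedding x =ᵐ[volume.restrict (Ioi 0)] fun t => x ⌊t⌋₊ :=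
  MemLp.coeFn_toLp (memLp_comp_natFloor x)

theorem integrableOn_comp_natFloor_mul (x : ℓ²) (f : L²₊) :
    IntegrableOn (fun s => x ⌊s⌋₊ * f s) (Ioi 0) :=
  (memLp_comp_natFloor x).integrable_mul (Lp.memLp f)

theorem adjoint_floorEmbedding_apply (f : L²₊) (k : ℕ) :
    adjoint floorEmbedding.toContinuousLinearMap f k = ∫ s in Ioo (k : ℝ) (k + 1), f s := by
  calc adjoint floorEmbedding.toContinuousLinearMap f k
      = inner ℂ (floorEmbedding (lp.single 2 k 1)) f := by
        rw [← LinearIsometry.coe_toContinuousLinearMap, ← adjoint_inner_right,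
          lp.inner_single_left, RCLike.inner_apply, map_one, mul_one]
    _ = ∫ s in Ioi 0, (lp.single 2 k (1 : ℂ) : ℕ → ℂ) ⌊s⌋₊ * f s := by
        rw [L2.inner_def]
        refine integral_congr_ae ?_
        filter_upwards [coeFn_floorEmbedding (lp.single 2 k 1)] with t ht
        rw [ht, RCLike.inner_apply, lp.single_apply, Pi.single_apply]
        split_ifs <;> simp
    _ = ∫ s in Ioo (k : ℝ) (k + 1), f s := by
        rw [integral_Ioi_comp_natFloor_mul (integrableOn_comp_natFloor_mul _ f),
          tsum_eq_single k fun j hj => by rw [lp.single_apply_ne _ _ _ hj, zero_mul],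
          lp.single_apply_self, one_mul]

theorem hankel_single_apply {c : ℕ → ℂ} {H : ℓ² →L[ℂ] ℓ²}
    (hH : ∀ x : ℓ², ∀ k, H x k = ∑' j, c (j + k) * x j) (m k : ℕ) :
    H (lp.single 2 m 1) k = c (m + k) := by
  rw [hH, tsum_eq_single m fun j hj => by rw [lp.single_apply_ne _ _ _ hj, mul_zero],
    lp.single_apply_self, mul_one]

theorem eq_floorEmbedding_comp_hankel_comp_adjoint {c : ℕ → ℂ} {H : ℓ² →L[ℂ] ℓ²}
    (hH : ∀ x : ℓ², ∀ k, H x k = ∑' j, c (j + k) * x j) {K : L²₊ →L[ℂ] L²₊}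
    (hK : ∀ f : L²₊, K f =ᵐ[volume.restrict (Ioi 0)]
      fun t => ∫ s in Ioi 0, c (⌊s⌋₊ + ⌊t⌋₊) * f s) :
    K = floorEmbedding.toContinuousLinearMap ∘L H ∘L
      adjoint floorEmbedding.toContinuousLinearMap := by
  refine ContinuousLinearMap.ext fun f => Lp.ext ?_
  filter_upwards [hK f, coeFn_floorEmbedding (H (adjoint floorEmbedding.toContinuousLinearMap f))]
    with t hKt hΦt
  -- the kernel row `c (· + ⌊t⌋₊)` is the `⌊t⌋₊`-th column of `H`, hence in `ℓ²`
  have hrow : ∀ s : ℝ, c (⌊s⌋₊ + ⌊t⌋₊) = H (lp.single 2 ⌊t⌋₊ 1) ⌊s⌋₊ := fun s => by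
    rw [hankel_single_apply hH, add_comm]
  simp only [hrow] at hKt
  rw [hKt, comp_apply, comp_apply, LinearIsometry.coe_toContinuousLinearMap, hΦt, hH,
    integral_Ioi_comp_natFloor_mul (integrableOn_comp_natFloor_mul _ f)]
  simp only [adjoint_floorEmbedding_apply, hankel_single_apply hH, add_comm ⌊t⌋₊]

theorem floor_kernel_tensor_factorization_general
    (a : ℝ → ℝ)
    (lam : ℝ)
    (α : ℕ → ℝ) (hα : ∀ j : ℕ, α j = a ((j : ℝ) + lam))
    (K : Lp ℂ 2 (volume.restrict (Ioi (0:ℝ))) →L[ℂ] Lp ℂ 2 (volume.restrict (Ioi (0:ℝ))))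
    (hK : ∀ f : Lp ℂ 2 (volume.restrict (Ioi (0:ℝ))),
      (K f : ℝ → ℂ) =ᵐ[volume.restrict (Ioi (0:ℝ))]
        fun t => ∫ s in Ioi (0:ℝ), (a (lam + (⌊t⌋ : ℝ) + (⌊s⌋ : ℝ)) : ℂ) * f s)
    (Hα : lp (fun _ : ℕ => ℂ) 2 →L[ℂ] lp (fun _ : ℕ => ℂ) 2)
    (hHα : ∀ x : lp (fun _ : ℕ => ℂ) 2, ∀ k : ℕ,
      (Hα x : ∀ _ : ℕ, ℂ) k = ∑' j : ℕ, (α (j + k) : ℂ) * (x : ∀ _ : ℕ, ℂ) j) :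
    (∃ Φ : lp (fun _ : ℕ => ℂ) 2 →L[ℂ] Lp ℂ 2 (volume.restrict (Ioi (0:ℝ))),
        (∀ x, ‖Φ x‖ = ‖x‖) ∧ K = Φ.comp (Hα.comp (adjoint Φ))) ∧
    ‖K‖ = ‖Hα‖ ∧
    ∀ p : ℝ, 0 < p →
      schattenNorm p K = schattenNorm p Hα ∧ (MemSchatten p Hα ↔ MemSchatten p K) := by
  have hK' : ∀ f : L²₊, K f =ᵐ[volume.restrict (Ioi 0)]
      fun t => ∫ s in Ioi 0, (α (⌊s⌋₊ + ⌊t⌋₊) : ℂ) * f s := fun f => by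
    filter_upwards [hK f, ae_restrict_mem measurableSet_Ioi] with t hKt ht
    rw [hKt]
    refine setIntegral_congr_fun measurableSet_Ioi fun s hs => ?_
    have harg : lam + (⌊t⌋ : ℝ) + (⌊s⌋ : ℝ) = ((⌊s⌋₊ + ⌊t⌋₊ : ℕ) : ℝ) + lam := by
      rw [Nat.cast_add, natCast_floor_eq_intCast_floor hs.le,
        natCast_floor_eq_intCast_floor ht.le]
      ring
    simp only [harg, hα]
  have hKΦ := eq_floorEmbedding_comp_hankel_comp_adjoint (c := fun n => (α n : ℂ)) hHα hK'
  have hsv : ∀ n, singularValue K n = singularValue Hα n := fun n => by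
    rw [hKΦ, singularValue_conj_of_norm_map floorEmbedding.norm_map]
  refine ⟨⟨floorEmbedding.toContinuousLinearMap, floorEmbedding.norm_map, hKΦ⟩, ?_, fun p _ => ?_⟩
  · rw [← singularValue_zero, ← singularValue_zero, hsv]
  · simp only [schattenNorm, MemSchatten, hsv, iff_self, and_self]

/-- For `λ ≥ 2` and `α(j) = a(j+λ)` with `a` positive decreasing, the integral operator `K`
on `L²(0,∞)` with kernel `a(λ + ⌊t⌋ + ⌊s⌋)` is, under `L²(0,∞) ≅ ℓ² ⊗ L²(0,1)`, the
tensor product of the Hankel matrix `H(α)` with a norm-one rank-one operator: concretely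
`K = Φ H(α) Φ*` for an isometry `Φ : ℓ² → L²(0,∞)`. Consequently `‖K‖ = ‖H(α)‖` and
`‖K‖_{S_p} = ‖H(α)‖_{S_p}` for all `p > 0`. -/
theorem floor_kernel_tensor_factorization
    (a : ℝ → ℝ) (ha_pos : ∀ t, 0 < t → 0 < a t) (ha_mono : AntitoneOn a (Ioi 0))
    (lam : ℝ) (hlam : 2 ≤ lam)
    (α : ℕ → ℝ) (hα : ∀ j : ℕ, α j = a ((j : ℝ) + lam))
    (K : Lp ℂ 2 (volume.restrict (Ioi (0:ℝ))) →L[ℂ] Lp ℂ 2 (volume.restrict (Ioi (0:ℝ))))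
    (hK : ∀ f : Lp ℂ 2 (volume.restrict (Ioi (0:ℝ))),
      (K f : ℝ → ℂ) =ᵐ[volume.restrict (Ioi (0:ℝ))]
        fun t => ∫ s in Ioi (0:ℝ), (a (lam + (⌊t⌋ : ℝ) + (⌊s⌋ : ℝ)) : ℂ) * f s)
    (Hα : lp (fun _ : ℕ => ℂ) 2 →L[ℂ] lp (fun _ : ℕ => ℂ) 2)
    (hHα : ∀ x : lp (fun _ : ℕ => ℂ) 2, ∀ k : ℕ,
      (Hα x : ∀ _ : ℕ, ℂ) k = ∑' j : ℕ, (α (j + k) : ℂ) * (x : ∀ _ : ℕ, ℂ) j) :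
    (∃ Φ : lp (fun _ : ℕ => ℂ) 2 →L[ℂ] Lp ℂ 2 (volume.restrict (Ioi (0:ℝ))),
        (∀ x, ‖Φ x‖ = ‖x‖) ∧ K = Φ.comp (Hα.comp (adjoint Φ))) ∧
    ‖K‖ = ‖Hα‖ ∧
    ∀ p : ℝ, 0 < p →
      schattenNorm p K = schattenNorm p Hα ∧ (MemSchatten p Hα ↔ MemSchatten p K) :=
  floor_kernel_tensor_factorization_general a lam α hα K hK Hα hHα
end

section
/- Let b : (0,∞) → ℝ be positive and decreasing, and w_m, b̌_m as above. Then for every 0 < p < ∞ and m ∈ ℤ, 2^m ∫_ℝ |b̌_m(ξ)|^p dξ ≥ 2^{-5}(b̌_m(0)/2)^p, and moreover b̌_m(0) ≥ c·2^m·b(2^{m+1}) where c = ∫_0^∞ w(t)dt > 0 (assuming w is not identically zero). -/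
open Set MeasureTheory Real

/-- For `b` positive decreasing on `(0,∞)`, `w` smooth non-negative supported in `[1/2,2]`
and not identically zero, with `b̌_m(ξ) = ∫_0^∞ b(t) w(t/2^m) e^{2πiξt} dt`, one has, for
every `0 < p < ∞` and every `m ∈ ℤ`:
`2^m ∫_ℝ |b̌_m(ξ)|^p dξ ≥ 2^{-5} (b̌_m(0)/2)^p`, and `b̌_m(0) ≥ c 2^m b(2^{m+1})` with
`c = ∫_0^∞ w > 0`. -/
theorem fourier_integral_lp_lower_bound
    (b : ℝ → ℝ) (hb_pos : ∀ t, 0 < t → 0 < b t) (hb_mono : AntitoneOn b (Ioi 0))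
    (w : ℝ → ℝ) (hw_smooth : ContDiff ℝ (⊤ : ℕ∞) w) (hw_nonneg : ∀ t, 0 ≤ w t)
    (hw_supp : Function.support w ⊆ Icc (1/2 : ℝ) 2) (hw_ne : ∃ t, w t ≠ 0)
    (p : ℝ) (hp : 0 < p) (m : ℤ) :
    (ENNReal.ofReal ((2:ℝ) ^ (-5 : ℤ) *
        ((∫ t in Ioi (0:ℝ), b t * w (t / (2:ℝ) ^ m)) / 2) ^ p)
      ≤ ENNReal.ofReal ((2:ℝ) ^ m) *
        ∫⁻ ξ : ℝ, ENNReal.ofReal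
          (‖∫ t in Ioi (0:ℝ), ((b t * w (t / (2:ℝ) ^ m) : ℝ) : ℂ)
              * Complex.exp (2 * (π : ℂ) * Complex.I * (ξ : ℂ) * (t : ℂ))‖ ^ p)) ∧
    (0 < ∫ t in Ioi (0:ℝ), w t) ∧
    ((∫ t in Ioi (0:ℝ), w t) * (2:ℝ) ^ m * b ((2:ℝ) ^ (m + 1))
      ≤ ∫ t in Ioi (0:ℝ), b t * w (t / (2:ℝ) ^ m)) := by
  have hW : Continuous w := hw_smooth.continuous
  have hwcs : HasCompactSupport w :=
    HasCompactSupport.intro isCompact_Icc (fun x hx => by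
      by_contra h; exact hx (hw_supp h))
  have hc2pos : (0:ℝ) < (2:ℝ) ^ m := zpow_pos (by norm_num) m
  set c2 : ℝ := (2:ℝ) ^ m with hc2
  -- support of the integrand
  have hFsupp : ∀ t : ℝ, b t * w (t / c2) ≠ 0 → t ∈ Icc (c2/2) (2*c2) := by
    intro t ht
    have hw' : w (t / c2) ≠ 0 := fun h => ht (by simp [h])
    have h1 := hw_supp hw'
    constructor
    · have := h1.1
      rw [le_div_iff₀ hc2pos] at this
      linarith
    · have := h1.2
      rw [div_le_iff₀ hc2pos] at this
      linarith
  have hFnonneg : ∀ t : ℝ, 0 ≤ b t * w (t / c2) := by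
    intro t
    by_cases h : b t * w (t / c2) = 0
    · simp [h]
    · have ht := hFsupp t h
      have htpos : 0 < t := lt_of_lt_of_le (by positivity) ht.1
      exact mul_nonneg (hb_pos t htpos).le (hw_nonneg _)
  -- measurability
  have hb'anti : Antitone (fun t => b (max t (c2/2))) := by
    intro s t hst
    exact hb_mono (by simp only [mem_Ioi]; positivity)
      (by simp only [mem_Ioi]; positivity) (max_le_max hst le_rfl)
  have hF'eq : ∀ t : ℝ, b t * w (t / c2) = b (max t (c2/2)) * w (t / c2) := by
    intro t
    by_cases h : w (t / c2) = 0
    · simp [h]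
    · have h1 := (hw_supp h).1
      rw [le_div_iff₀ hc2pos] at h1
      rw [max_eq_left (by linarith : c2/2 ≤ t)]
  have hFmeas : Measurable (fun t : ℝ => b t * w (t / c2)) := by
    have : (fun t : ℝ => b t * w (t / c2)) = fun t => b (max t (c2/2)) * w (t / c2) :=
      funext hF'eq
    rw [this]
    exact hb'anti.measurable.mul (hW.measurable.comp (measurable_id.div_const c2))
  -- uniform bound
  obtain ⟨M, hM⟩ := hwcs.exists_bound_of_continuous hW
  have hbpos2 : 0 < b (c2/2) := hb_pos _ (by positivity)
  have hM0 : 0 ≤ M := le_trans (norm_nonneg _) (hM 0)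
  have hFbd : ∀ t : ℝ, ‖b t * w (t / c2)‖ ≤
      (Icc (c2/2) (2*c2)).indicator (fun _ => b (c2/2) * M) t := by
    intro t
    by_cases hmem : t ∈ Icc (c2/2) (2*c2)
    · rw [indicator_of_mem hmem]
      rw [Real.norm_eq_abs, abs_of_nonneg (hFnonneg t)]
      have htpos : 0 < t := lt_of_lt_of_le (by positivity) hmem.1
      have hb1 : b t ≤ b (c2/2) :=
        hb_mono (by simp only [mem_Ioi]; positivity) (mem_Ioi.mpr htpos) hmem.1
      have hw1 : w (t / c2) ≤ M := le_trans (le_abs_self _) (hM _)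
      exact mul_le_mul hb1 hw1 (hw_nonneg _) hbpos2.le
    · rw [indicator_of_notMem hmem]
      have : b t * w (t / c2) = 0 := by
        by_contra h; exact hmem (hFsupp t h)
      simp [this]
  have hIndInt : Integrable ((Icc (c2/2) (2*c2)).indicator (fun _ => b (c2/2) * M)) := by
    rw [integrable_indicator_iff measurableSet_Icc]
    exact integrableOn_const measure_Icc_lt_top.ne
  have hFint : Integrable (fun t : ℝ => b t * w (t / c2)) :=
    hIndInt.mono' hFmeas.aestronglyMeasurable (Filter.Eventually.of_forall hFbd)
  -- complex integrand
  have hexp : ∀ (ξ t : ℝ), (2 * (π : ℂ) * Complex.I * (ξ : ℂ) * (t : ℂ))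
      = ((2 * π * ξ * t : ℝ) : ℂ) * Complex.I := by
    intro ξ t; push_cast; ring
  have hGnorm : ∀ (ξ t : ℝ),
      ‖((b t * w (t / c2) : ℝ) : ℂ) * Complex.exp (2 * (π : ℂ) * Complex.I * (ξ : ℂ) * (t : ℂ))‖
        = ‖b t * w (t / c2)‖ := by
    intro ξ t
    rw [norm_mul, hexp, Complex.norm_exp_ofReal_mul_I,
      Complex.norm_real, mul_one]
  have hGint : ∀ ξ : ℝ, Integrable (fun t : ℝ =>
      ((b t * w (t / c2) : ℝ) : ℂ) * Complex.exp (2 * (π : ℂ) * Complex.I * (ξ : ℂ) * (t : ℂ))) := by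
    intro ξ
    refine hIndInt.mono' ?_ (Filter.Eventually.of_forall fun t => ?_)
    · exact ((Complex.measurable_ofReal.comp hFmeas).mul
        (Complex.continuous_exp.comp (continuous_const.mul Complex.continuous_ofReal)).measurable).aestronglyMeasurable
    · rw [hGnorm]; exact hFbd t
  have hcosInt : ∀ ξ : ℝ, Integrable (fun t : ℝ => b t * w (t / c2) * Real.cos (2*π*ξ*t)) := by
    intro ξ
    refine hIndInt.mono' ?_ (Filter.Eventually.of_forall fun t => ?_)
    · exact (hFmeas.mul (Real.continuous_cos.comp
        (continuous_const.mul continuous_id)).measurable).aestronglyMeasurable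
    · rw [norm_mul]
      calc ‖b t * w (t / c2)‖ * ‖Real.cos (2*π*ξ*t)‖
          ≤ ‖b t * w (t / c2)‖ * 1 := by
            refine mul_le_mul_of_nonneg_left ?_ (norm_nonneg _)
            rw [Real.norm_eq_abs]; exact Real.abs_cos_le_one _
        _ = ‖b t * w (t / c2)‖ := mul_one _
        _ ≤ _ := hFbd t
  have hRe : ∀ ξ : ℝ, (∫ t in Ioi (0:ℝ), ((b t * w (t / c2) : ℝ) : ℂ)
        * Complex.exp (2 * (π : ℂ) * Complex.I * (ξ : ℂ) * (t : ℂ))).re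
      = ∫ t in Ioi (0:ℝ), b t * w (t / c2) * Real.cos (2*π*ξ*t) := by
    intro ξ
    have h2 := integral_re (μ := volume.restrict (Ioi (0:ℝ))) (hGint ξ).integrableOn
    simp only [RCLike.re_to_complex] at h2
    rw [← h2]
    refine setIntegral_congr_fun measurableSet_Ioi (fun t _ => ?_)
    rw [hexp, Complex.mul_re, Complex.ofReal_re, Complex.ofReal_im, zero_mul, sub_zero,
      Complex.exp_ofReal_mul_I_re]
  set B : ℝ := ∫ t in Ioi (0:ℝ), b t * w (t / c2) with hBdef
  have hB0 : 0 ≤ B := setIntegral_nonneg measurableSet_Ioi (fun t _ => hFnonneg t)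
  set ε : ℝ := 1 / (32 * c2) with hεdef
  have hε : 0 < ε := by positivity
  have hlow : ∀ ξ ∈ Ioo (-ε) ε, B / 2 ≤ ‖∫ t in Ioi (0:ℝ), ((b t * w (t / c2) : ℝ) : ℂ)
      * Complex.exp (2 * (π : ℂ) * Complex.I * (ξ : ℂ) * (t : ℂ))‖ := by
    intro ξ hξ
    have hξabs : |ξ| ≤ ε := le_of_lt (abs_lt.mpr ⟨hξ.1, hξ.2⟩)
    have hcos : ∀ t : ℝ, b t * w (t / c2) / 2 ≤ b t * w (t / c2) * Real.cos (2*π*ξ*t) := by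
      intro t
      by_cases h : b t * w (t / c2) = 0
      · simp [h]
      · have ht := hFsupp t h
        have htpos : 0 < t := lt_of_lt_of_le (by positivity) ht.1
        have hx : |2*π*ξ*t| ≤ 1 := by
          have he : |2*π*ξ*t| = 2 * |π| * |ξ| * |t| := by
            rw [abs_mul, abs_mul, abs_mul, abs_two]
          have hπ : π ≤ 4 := Real.pi_le_four
          have ht' : |t| ≤ 2*c2 := by rw [abs_of_nonneg htpos.le]; exact ht.2
          have hξ' : |ξ| ≤ 1/(32*c2) := by rw [← hεdef]; exact hξabs
          have hπ' : |π| = π := abs_of_nonneg Real.pi_nonneg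
          have hb1 : 2 * |π| * |ξ| * |t| ≤ 2*4*(1/(32*c2))*(2*c2) := by
            gcongr
            · rw [hπ']; exact hπ
          have hb2 : 2*4*(1/(32*c2))*(2*c2) = 1/2 := by field_simp; ring
          rw [he]; rw [hb2] at hb1; linarith
        have hcosge : (1:ℝ)/2 ≤ Real.cos (2*π*ξ*t) := by
          have h1 := Real.one_sub_sq_div_two_le_cos (x := 2*π*ξ*t)
          nlinarith [h1, sq_abs (2*π*ξ*t), abs_nonneg (2*π*ξ*t), hx]
        have := mul_le_mul_of_nonneg_left hcosge (hFnonneg t)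
        linarith
    calc B / 2 = ∫ t in Ioi (0:ℝ), b t * w (t / c2) / 2 := by
          rw [hBdef, integral_div]
      _ ≤ ∫ t in Ioi (0:ℝ), b t * w (t / c2) * Real.cos (2*π*ξ*t) :=
          integral_mono (hFint.div_const 2).integrableOn (hcosInt ξ).integrableOn hcos
      _ = (∫ t in Ioi (0:ℝ), ((b t * w (t / c2) : ℝ) : ℂ)
            * Complex.exp (2 * (π : ℂ) * Complex.I * (ξ : ℂ) * (t : ℂ))).re := (hRe ξ).symm
      _ ≤ ‖_‖ := Complex.re_le_norm _
      _ = _ := rfl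
  have hwint : Integrable w := hW.integrable_of_hasCompactSupport hwcs
  have heq : ∫ t in Ioi (0:ℝ), w t = ∫ t : ℝ, w t :=
    setIntegral_eq_integral_of_forall_compl_eq_zero (fun t ht => by
      by_contra h
      exact ht (mem_Ioi.mpr (lt_of_lt_of_le (by norm_num) (hw_supp h).1)))
  refine ⟨?_, ?_, ?_⟩
  · -- main lower bound
    have hrp : 0 ≤ (B/2)^p := Real.rpow_nonneg (by positivity) p
    have key : ENNReal.ofReal ((B/2)^p) * volume (Ioo (-ε) ε)
        ≤ ∫⁻ ξ : ℝ, ENNReal.ofReal (‖∫ t in Ioi (0:ℝ), ((b t * w (t / c2) : ℝ) : ℂ)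
            * Complex.exp (2 * (π : ℂ) * Complex.I * (ξ : ℂ) * (t : ℂ))‖ ^ p) := by
      calc ENNReal.ofReal ((B/2)^p) * volume (Ioo (-ε) ε)
          = ∫⁻ _ in Ioo (-ε) ε, ENNReal.ofReal ((B/2)^p) := (setLIntegral_const _ _).symm
        _ = ∫⁻ ξ : ℝ, (Ioo (-ε) ε).indicator (fun _ => ENNReal.ofReal ((B/2)^p)) ξ :=
            (lintegral_indicator measurableSet_Ioo _).symm
        _ ≤ _ := by
            refine lintegral_mono fun ξ => ?_
            by_cases hξ : ξ ∈ Ioo (-ε) ε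
            · rw [indicator_of_mem hξ]
              exact ENNReal.ofReal_le_ofReal
                (Real.rpow_le_rpow (by positivity) (hlow ξ hξ) hp.le)
            · rw [indicator_of_notMem hξ]; exact zero_le
    have hvol : volume (Ioo (-ε) ε) = ENNReal.ofReal (2*ε) := by
      rw [Real.volume_Ioo]; congr 1; ring
    calc ENNReal.ofReal ((2:ℝ) ^ (-5:ℤ) * (B/2)^p)
        ≤ ENNReal.ofReal (c2 * ((B/2)^p * (2*ε))) := by
          refine ENNReal.ofReal_le_ofReal ?_
          have h16 : c2 * ((B/2)^p * (2*ε)) = (B/2)^p / 16 := by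
            rw [hεdef]; field_simp; ring
          have h5 : (2:ℝ) ^ (-5:ℤ) = 1/32 := by norm_num
          rw [h16, h5]; linarith
      _ = ENNReal.ofReal c2 * (ENNReal.ofReal ((B/2)^p) * ENNReal.ofReal (2*ε)) := by
          rw [ENNReal.ofReal_mul hc2pos.le, ENNReal.ofReal_mul hrp]
      _ = ENNReal.ofReal c2 * (ENNReal.ofReal ((B/2)^p) * volume (Ioo (-ε) ε)) := by
          rw [hvol]
      _ ≤ _ := mul_le_mul_right key _
  · -- positivity of ∫ w
    rw [heq]
    rw [integral_pos_iff_support_of_nonneg (fun t => hw_nonneg t) hwint]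
    exact hW.isOpen_support.measure_pos volume hw_ne
  · -- lower bound for B
    have h2m1 : (2:ℝ)^(m+1) = 2*c2 := by
      rw [hc2, zpow_add_one₀ (two_ne_zero)]; ring
    rw [h2m1]
    have hcsupp : HasCompactSupport (fun t : ℝ => w (t / c2)) := by
      refine HasCompactSupport.intro (isCompact_Icc (a := c2/2) (b := 2*c2)) (fun x hx => ?_)
      by_contra h
      have h1 := hw_supp h
      have h2 := h1.1; have h3 := h1.2
      rw [le_div_iff₀ hc2pos] at h2
      rw [div_le_iff₀ hc2pos] at h3
      exact hx ⟨by linarith, by linarith⟩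
    have hwcomp : Integrable (fun t : ℝ => w (t / c2)) :=
      (hW.comp (continuous_id.div_const c2)).integrable_of_hasCompactSupport hcsupp
    have hmono : ∀ t ∈ Ioi (0:ℝ), b (2*c2) * w (t / c2) ≤ b t * w (t / c2) := by
      intro t ht
      by_cases h : w (t / c2) = 0
      · simp [h]
      · have h3 := (hw_supp h).2
        rw [div_le_iff₀ hc2pos] at h3
        have hbt : b (2*c2) ≤ b t :=
          hb_mono (mem_Ioi.mp ht) (by simp only [mem_Ioi]; positivity) (by linarith)
        exact mul_le_mul_of_nonneg_right hbt (hw_nonneg _)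
    have hstep : ∫ t in Ioi (0:ℝ), b (2*c2) * w (t/c2) ≤ B :=
      setIntegral_mono_on ((hwcomp.const_mul _).integrableOn) hFint.integrableOn
        measurableSet_Ioi hmono
    have heq2 : ∫ t in Ioi (0:ℝ), w (t/c2) = ∫ t : ℝ, w (t/c2) :=
      setIntegral_eq_integral_of_forall_compl_eq_zero (fun t ht => by
        by_contra h
        have h2 := (hw_supp h).1
        rw [le_div_iff₀ hc2pos] at h2
        exact ht (mem_Ioi.mpr (by nlinarith)))
    have hcomp2 : ∫ t in Ioi (0:ℝ), w (t/c2) = c2 * ∫ t in Ioi (0:ℝ), w t := by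
      rw [heq2, MeasureTheory.Measure.integral_comp_div w c2, heq, abs_of_pos hc2pos, smul_eq_mul]
    have hfin : ∫ t in Ioi (0:ℝ), b (2*c2) * w (t/c2)
        = b (2*c2) * (c2 * ∫ t in Ioi (0:ℝ), w t) := by
      rw [MeasureTheory.integral_const_mul, hcomp2]
    calc (∫ t in Ioi (0:ℝ), w t) * c2 * b (2*c2)
        = ∫ t in Ioi (0:ℝ), b (2*c2) * w (t/c2) := by rw [hfin]; ring
      _ ≤ B := hstep
end
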